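/- (Main theorem, complete allocation, egalitarian welfare p = −∞.) For every ε with 0 < ε < 1/2 there exists a complete allocation X = (X_1,…,X_n) of M that is (1/2 − ε)-EFX and satisfies, for every allocation X* = (X*_1,…,X*_n) of pairwise disjoint subsets of M, min_i v_i(X_i) ≥ ( (1 − 2ε)/(8(n+1)) ) · min_i v_i(X*_i). -/

import Mathlib

/-!
Fix an allocation `Z` of maximal egalitarian welfare `μ` and a floor `t` with `(2n + 1) t ≤ μ`.
A local search keeps the assigned agents' bundles, a pool of unallocated goods and a bag that is
being filled for the unassigned agents, such that every assigned agent gets at least `t`, is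
`1/2`-EFX towards every assigned bundle and values the bag at most as much as its own bundle,
while every unassigned agent values the bag at most `t` and every assigned bundle at most `2t`
up to any good, as well as its own part of `Z` inside that bundle.

A pool good goes, in this order of preference, as a singleton to an unassigned agent valuing it
at `t`; as a singleton or together with the bag to an assigned agent who prefers that to its
bundle (the old bundle returns to the pool); together with the bag to an unassigned agent valuing
that at `t`; otherwise into the bag. Once the pool is empty, subadditivity over the parts of `Z`
shows that an unassigned agent values the bag at least `t`, so it can take it. Once everyone is
assigned, bundles are rotated along envy cycles until some bundle is envied by nobody, and the bag
joins that bundle. Every move assigns an agent, or improves some agent while hurting nobody, or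
shrinks the pool, so the search stops.
-/

open Finset

theorem Function.nonempty_periodicPts {α : Type*} [Finite α] [Nonempty α] (f : α → α) :
    (Function.periodicPts f).Nonempty := by
  obtain ⟨m, k, hmk, heq⟩ :=
    Finite.exists_ne_map_eq_of_infinite fun m : ℕ => f^[m] (Classical.arbitrary α)
  wlog hlt : m < k generalizing m k
  · exact this k m hmk.symm heq.symm (hmk.lt_or_gt.resolve_left hlt)
  refine ⟨f^[m] (Classical.arbitrary α), Function.mk_mem_periodicPts (Nat.sub_pos_of_lt hlt) ?_⟩
  rw [Function.IsPeriodicPt, Function.IsFixedPt, ← Function.iterate_add_apply,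
    Nat.sub_add_cancel hlt.le]
  exact heq.symm

/-- Walking backwards along `R` from a periodic point of a choice of predecessors gives a cycle;
rotating along it is the permutation. -/
theorem Equiv.Perm.exists_rel_apply_of_forall_exists_rel {α : Type*} [Finite α] [Nonempty α]
    (R : α → α → Prop) (h : ∀ k, ∃ i, R i k) :
    ∃ σ : Equiv.Perm α, (∀ i, σ i = i ∨ R i (σ i)) ∧ ∃ i, R i (σ i) := by
  classical
  choose f hf using h
  let S := Function.periodicPts f
  let τ : Equiv.Perm α := Equiv.Perm.ofSubtype ((Function.bijOn_periodicPts f).equiv f)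
  have hτS : ∀ x ∈ S, τ x = f x := fun x hx => by
    simp [τ, Equiv.Perm.ofSubtype_apply_of_mem _ hx, Set.BijOn.equiv]
  have hτ : ∀ x ∉ S, τ x = x := fun x hx => Equiv.Perm.ofSubtype_apply_of_not_mem _ hx
  have key : ∀ i ∈ S, R i (τ.symm i) := by
    intro i hi
    have hmem : τ.symm i ∈ S := by
      by_contra hout
      have := hτ _ hout
      rw [Equiv.apply_symm_apply] at this
      exact hout (this ▸ hi)
    have hf_symm : f (τ.symm i) = i := by rw [← hτS _ hmem, Equiv.apply_symm_apply]
    simpa only [hf_symm] using hf (τ.symm i)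
  obtain ⟨y, hy⟩ := Function.nonempty_periodicPts f
  refine ⟨τ.symm, fun i => ?_, y, key y hy⟩
  by_cases hi : i ∈ S
  · exact Or.inr (key i hi)
  · exact Or.inl ((Equiv.symm_apply_eq _).2 (hτ i hi).symm)

namespace SubadditiveEFX

variable {ι G : Type*}

section Valuation

variable [DecidableEq G]

structure IsSubadditiveValuation (w : Finset G → ℝ) : Prop where
  map_empty : w ∅ = 0
  mono : Monotone w
  union_le : ∀ A B, w (A ∪ B) ≤ w A + w B

namespace IsSubadditiveValuation

variable {w : Finset G → ℝ}

lemma nonneg (hw : IsSubadditiveValuation w) (S : Finset G) : 0 ≤ w S :=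
  hw.map_empty ▸ hw.mono (empty_subset S)

lemma insert_le (hw : IsSubadditiveValuation w) (g : G) (S : Finset G) :
    w (insert g S) ≤ w {g} + w S := by
  rw [insert_eq]
  exact hw.union_le _ _

lemma biUnion_le (hw : IsSubadditiveValuation w) {κ : Type*} (s : Finset κ)
    (F : κ → Finset G) : w (s.biUnion F) ≤ ∑ k ∈ s, w (F k) := by
  classical
  induction s using Finset.induction_on with
  | empty => simp [hw.map_empty]
  | insert k s hk ih =>
    rw [biUnion_insert, sum_insert hk]
    exact (hw.union_le _ _).trans (by linarith)

end IsSubadditiveValuation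

def EFXBounded (w : Finset G → ℝ) (S : Finset G) (c : ℝ) : Prop :=
  ∀ g ∈ S, w (S \ {g}) ≤ c

variable {w : Finset G → ℝ} {T S : Finset G} {c c' t : ℝ}

lemma EFXBounded.of_le (hw : IsSubadditiveValuation w) (h : w S ≤ c) : EFXBounded w S c :=
  fun _ _ => (hw.mono sdiff_subset).trans h

lemma EFXBounded.mono (h : EFXBounded w S c) (hc : c ≤ c') : EFXBounded w S c' :=
  fun g hg => (h g hg).trans hc

lemma efxBounded_singleton (hw : IsSubadditiveValuation w) (hc : 0 ≤ c) (g : G) :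
    EFXBounded w {g} c := by
  intro x hx
  simp [mem_singleton.1 hx, hw.map_empty, hc]

def IsCheap (w : Finset G → ℝ) (T : Finset G) (t : ℝ) (S : Finset G) : Prop :=
  EFXBounded w S (2 * t) ∧ w (T ∩ S) ≤ 2 * t

lemma IsCheap.of_le (hw : IsSubadditiveValuation w) (h : w S ≤ 2 * t) : IsCheap w T t S :=
  ⟨.of_le hw h, (hw.mono inter_subset_right).trans h⟩

lemma isCheap_singleton (hw : IsSubadditiveValuation w) (ht : 0 ≤ t) {g : G}
    (h : g ∈ T → w {g} ≤ 2 * t) : IsCheap w T t {g} := by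
  refine ⟨efxBounded_singleton hw (by linarith) g, ?_⟩
  by_cases hg : g ∈ T
  · exact (hw.mono inter_subset_right).trans (h hg)
  · rw [inter_singleton_of_notMem hg, hw.map_empty]
    linarith

end Valuation

lemma exists_optimal_allocation [Fintype ι] (M : Finset G) (f : (ι → Finset G) → ℝ) :
    ∃ Z : ι → Finset G, (∀ i, Z i ⊆ M) ∧ (∀ i j, i ≠ j → Disjoint (Z i) (Z j)) ∧
      ∀ X : ι → Finset G, (∀ i, X i ⊆ M) → (∀ i j, i ≠ j → Disjoint (X i) (X j)) →
        f X ≤ f Z := by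
  classical
  let allocations := (Fintype.piFinset fun _ : ι => M.powerset).filter
    fun X => ∀ i j, i ≠ j → Disjoint (X i) (X j)
  obtain ⟨Z, hZ, hmax⟩ := allocations.exists_max_image f ⟨fun _ => ∅, by simp [allocations]⟩
  simp only [allocations, mem_filter, Fintype.mem_piFinset, mem_powerset] at hZ hmax
  exact ⟨Z, hZ.1, hZ.2, fun X hXM hX => hmax X ⟨hXM, hX⟩⟩

inductive Place (ι : Type*) where
  | agent (i : ι)
  | pool
  | bag
  deriving DecidableEq

structure State (ι G : Type*) where
  assigned : Finset ι
  place : G → Place ι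

namespace State

def permute (s : State ι G) (σ : Equiv.Perm ι) : State ι G where
  assigned := s.assigned
  place g := match s.place g with
    | .agent i => .agent (σ.symm i)
    | p => p

@[simp] lemma assigned_permute (s : State ι G) (σ : Equiv.Perm ι) :
    (s.permute σ).assigned = s.assigned := rfl

section

variable [DecidableEq G]

def toBag (s : State ι G) (h : G) : State ι G where
  assigned := s.assigned
  place := Function.update s.place h .bag

@[simp] lemma assigned_toBag (s : State ι G) (h : G) : (s.toBag h).assigned = s.assigned := rfl

end

variable [DecidableEq ι] (M : Finset G) (s : State ι G)

def bundle (i : ι) : Finset G := {g ∈ M | s.place g = .agent i}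

def pool : Finset G := {g ∈ M | s.place g = .pool}

def bag : Finset G := {g ∈ M | s.place g = .bag}

variable {M s} {g h : G} {i a : ι}

@[simp] lemma mem_bundle : g ∈ s.bundle M i ↔ g ∈ M ∧ s.place g = .agent i := mem_filter

@[simp] lemma mem_pool : g ∈ s.pool M ↔ g ∈ M ∧ s.place g = .pool := mem_filter

@[simp] lemma mem_bag : g ∈ s.bag M ↔ g ∈ M ∧ s.place g = .bag := mem_filter

lemma bundle_subset : s.bundle M i ⊆ M := filter_subset _ _

lemma disjoint_bundle {j : ι} (hij : i ≠ j) : Disjoint (s.bundle M i) (s.bundle M j) :=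
  disjoint_filter.2 fun _ _ hi hj => hij (Place.agent.inj (hi.symm.trans hj))

lemma mem_pool_or_mem_bag_or_mem_bundle (hg : g ∈ M) :
    g ∈ s.pool M ∨ g ∈ s.bag M ∨ ∃ i, g ∈ s.bundle M i := by
  cases hp : s.place g <;> simp [hg, hp]

lemma bundle_permute (σ : Equiv.Perm ι) : (s.permute σ).bundle M i = s.bundle M (σ i) := by
  ext g
  simp only [mem_bundle, permute]
  cases s.place g <;> simp [Equiv.symm_apply_eq]

lemma bag_permute (σ : Equiv.Perm ι) : (s.permute σ).bag M = s.bag M := by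
  ext g
  simp only [mem_bag, permute]
  cases s.place g <;> simp

variable [DecidableEq G]

variable (s) in
def give (a : ι) (W : Finset G) : State ι G where
  assigned := insert a s.assigned
  place g := if g ∈ W then .agent a else if s.place g = .agent a then .pool else s.place g

variable {W : Finset G}

@[simp] lemma assigned_give : (s.give a W).assigned = insert a s.assigned := rfl

lemma bundle_give (hW : W ⊆ s.bundle M a ∪ s.pool M ∪ s.bag M) (i : ι) :
    (s.give a W).bundle M i = if i = a then W else s.bundle M i := by
  ext g
  have hWM : g ∈ W → g ∈ M ∧ (s.place g = .agent a ∨ s.place g = .pool ∨ s.place g = .bag) :=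
    fun hg => by simpa [or_assoc, and_or_left] using hW hg
  by_cases hgW : g ∈ W <;> split_ifs with hia <;> simp [give, hgW, hia] <;> grind

lemma bag_give : (s.give a W).bag M = s.bag M \ W := by
  ext g
  simp only [mem_bag, give, mem_sdiff]
  split_ifs <;> grind

lemma pool_give : (s.give a W).pool M = (s.pool M ∪ s.bundle M a) \ W := by
  ext g
  simp only [mem_pool, give, mem_sdiff, mem_union, mem_bundle]
  split_ifs <;> grind

lemma bundle_toBag (hh : h ∈ s.pool M) : (s.toBag h).bundle M i = s.bundle M i := by
  ext g
  by_cases hgh : g = h <;> simp_all [toBag]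

lemma bag_toBag (hh : h ∈ s.pool M) : (s.toBag h).bag M = insert h (s.bag M) := by
  ext g
  by_cases hgh : g = h <;> simp_all [toBag]

lemma pool_toBag : (s.toBag h).pool M = (s.pool M).erase h := by
  ext g
  by_cases hgh : g = h <;> simp_all [toBag]

end State

open State

section Potential

variable (M : Finset G)

noncomputable def corank (w : Finset G → ℝ) (S : Finset G) : ℕ := #{T ∈ M.powerset | w S < w T}

variable {M} {w : Finset G → ℝ} {S S' : Finset G}

lemma corank_le_corank (h : w S ≤ w S') : corank M w S' ≤ corank M w S :=
  card_le_card <| monotone_filter_right _ fun _ _ hT => h.trans_lt hT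

lemma corank_lt_corank (hS' : S' ⊆ M) (h : w S < w S') : corank M w S' < corank M w S := by
  refine card_lt_card ⟨monotone_filter_right _ fun _ _ hT => h.le.trans_lt hT, fun hsub => ?_⟩
  exact lt_irrefl _ (mem_filter.1 (hsub (mem_filter.2 ⟨mem_powerset.2 hS', h⟩))).2

variable [DecidableEq ι] [Fintype ι] (M) (v : ι → Finset G → ℝ)

noncomputable def potential (s : State ι G) : ℕ ×ₗ ℕ ×ₗ ℕ :=
  toLex (#s.assignedᶜ, toLex (∑ i, corank M (v i) (s.bundle M i), #(s.pool M)))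

variable {M v} {s : State ι G}

lemma potential_lt_of_improve {s' : State ι G} (hA : s'.assigned = s.assigned)
    (hle : ∀ i, v i (s.bundle M i) ≤ v i (s'.bundle M i))
    (hlt : ∃ i, v i (s.bundle M i) < v i (s'.bundle M i)) :
    potential M v s' < potential M v s := by
  refine Prod.Lex.toLex_lt_toLex.2 (Or.inr ⟨by simp [hA], Prod.Lex.toLex_lt_toLex.2 (Or.inl ?_)⟩)
  obtain ⟨j, hj⟩ := hlt
  exact sum_lt_sum (fun i _ => corank_le_corank (hle i))
    ⟨j, mem_univ _, corank_lt_corank bundle_subset hj⟩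

variable [DecidableEq G]

lemma potential_give_lt {a : ι} (ha : a ∉ s.assigned) (W : Finset G) :
    potential M v (s.give a W) < potential M v s := by
  refine Prod.Lex.toLex_lt_toLex.2 (Or.inl ?_)
  rw [assigned_give, compl_insert]
  exact card_erase_lt_of_mem (mem_compl.2 ha)

lemma potential_give_lt_of_mem {j : ι} {W : Finset G} (hj : j ∈ s.assigned)
    (hW : W ⊆ s.bundle M j ∪ s.pool M ∪ s.bag M) (hgain : v j (s.bundle M j) < v j W) :
    potential M v (s.give j W) < potential M v s := by
  refine potential_lt_of_improve (insert_eq_of_mem hj) (fun i => ?_) ⟨j, by simpa [bundle_give hW]⟩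
  rw [bundle_give hW]
  split_ifs with hij
  · exact hij ▸ hgain.le
  · exact le_rfl

lemma potential_toBag_lt {h : G} (hh : h ∈ s.pool M) :
    potential M v (s.toBag h) < potential M v s := by
  refine Prod.Lex.toLex_lt_toLex.2 (Or.inr ⟨rfl, Prod.Lex.toLex_lt_toLex.2 (Or.inr ⟨?_, ?_⟩)⟩)
  · simp only [bundle_toBag hh]
  · rw [pool_toBag]
    exact card_erase_lt_of_mem hh

end Potential

lemma exists_owner_priority {Z : ι → Finset G} (hZ : ∀ i j, i ≠ j → Disjoint (Z i) (Z j))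
    {p : ι → Prop} {h : G} (hp : ∃ u, p u) : ∃ u, p u ∧ ∀ u', u' ≠ u → h ∈ Z u' → ¬p u' := by
  by_cases howner : ∃ u, p u ∧ h ∈ Z u
  · obtain ⟨u, hu, hZu⟩ := howner
    exact ⟨u, hu, fun u' hne hZu' _ => disjoint_left.1 (hZ u' u hne) hZu' hZu⟩
  · push Not at howner
    obtain ⟨u, hu⟩ := hp
    exact ⟨u, hu, fun u' _ hZu' hu' => howner u' hu' hZu'⟩

section Invariant

variable [DecidableEq ι] [DecidableEq G] (M : Finset G) (v : ι → Finset G → ℝ)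
  (Z : ι → Finset G) (t : ℝ)

structure Invariant (s : State ι G) : Prop where
  bundle_eq_empty : ∀ i ∉ s.assigned, s.bundle M i = ∅
  le_bundle : ∀ i ∈ s.assigned, t ≤ v i (s.bundle M i)
  efx : ∀ i ∈ s.assigned, ∀ j ∈ s.assigned,
    EFXBounded (v i) (s.bundle M j) (2 * v i (s.bundle M i))
  cheap : ∀ u ∉ s.assigned, ∀ k ∈ s.assigned, IsCheap (v u) (Z u) t (s.bundle M k)
  bag_le_bundle : ∀ j ∈ s.assigned, v j (s.bag M) ≤ v j (s.bundle M j)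
  bag_le : ∀ u ∉ s.assigned, v u (s.bag M) ≤ t

variable {M v Z t} {s : State ι G}

lemma Invariant.give (hv : ∀ i, IsSubadditiveValuation (v i)) (hs : Invariant M v Z t s)
    {a : ι} {W : Finset G} (hW : W ⊆ s.bundle M a ∪ s.pool M ∪ s.bag M)
    (hfloor : t ≤ v a W)
    (hothers : ∀ i ∈ s.assigned, i ≠ a → EFXBounded (v i) W (2 * v i (s.bundle M i)))
    (hself : ∀ j ∈ s.assigned, j ≠ a → EFXBounded (v a) (s.bundle M j) (2 * v a W))
    (hcheap : ∀ u ∉ s.assigned, u ≠ a → IsCheap (v u) (Z u) t W)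
    (hbag : v a (s.bag M \ W) ≤ v a W) :
    Invariant M v Z t (s.give a W) := by
  have hX := bundle_give hW
  constructor
  · intro i hi
    rw [assigned_give, mem_insert, not_or] at hi
    rw [hX, if_neg hi.1, hs.bundle_eq_empty i hi.2]
  · intro i hi
    rw [hX]
    split_ifs with hia
    · exact hia ▸ hfloor
    · exact hs.le_bundle i (mem_of_mem_insert_of_ne hi hia)
  · intro i hi j hj
    rw [hX, hX]
    by_cases hia : i = a <;> by_cases hja : j = a <;> simp only [hia, hja, if_true, if_false]
    · exact .of_le (hv a) (by linarith [(hv a).nonneg W])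
    · exact hself j (mem_of_mem_insert_of_ne hj hja) hja
    · exact hothers i (mem_of_mem_insert_of_ne hi hia) hia
    · exact hs.efx i (mem_of_mem_insert_of_ne hi hia) j (mem_of_mem_insert_of_ne hj hja)
  · intro u hu k hk
    rw [assigned_give, mem_insert, not_or] at hu
    rw [hX]
    split_ifs with hka
    · exact hcheap u hu.2 hu.1
    · exact hs.cheap u hu.2 k (mem_of_mem_insert_of_ne hk hka)
  · intro j hj
    rw [bag_give, hX]
    split_ifs with hja
    · exact hja ▸ hbag
    · exact ((hv j).mono sdiff_subset).trans
        (hs.bag_le_bundle j (mem_of_mem_insert_of_ne hj hja))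
  · intro u hu
    rw [assigned_give, mem_insert, not_or] at hu
    rw [bag_give]
    exact ((hv u).mono sdiff_subset).trans (hs.bag_le u hu.2)

lemma Invariant.give_of_not_mem (hv : ∀ i, IsSubadditiveValuation (v i))
    (hs : Invariant M v Z t s) {u : ι} {W : Finset G} (hu : u ∉ s.assigned)
    (hW : W ⊆ s.pool M ∪ s.bag M) (hval : t ≤ v u W)
    (hothers : ∀ i ∈ s.assigned, EFXBounded (v i) W (2 * v i (s.bundle M i)))
    (hcheap : ∀ u' ∉ s.assigned, u' ≠ u → IsCheap (v u') (Z u') t W) :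
    Invariant M v Z t (s.give u W) :=
  hs.give hv (hW.trans (union_subset_union subset_union_right Subset.rfl)) hval
    (fun i hi _ => hothers i hi) (fun j hj _ => (hs.cheap u hu j hj).1.mono (by linarith))
    hcheap (((hv u).mono sdiff_subset).trans ((hs.bag_le u hu).trans hval))

lemma Invariant.give_of_mem (hv : ∀ i, IsSubadditiveValuation (v i))
    (hs : Invariant M v Z t s) {j : ι} {W : Finset G} (hj : j ∈ s.assigned)
    (hW : W ⊆ s.bundle M j ∪ s.pool M ∪ s.bag M) (hgain : v j (s.bundle M j) ≤ v j W)
    (hothers : ∀ i ∈ s.assigned, i ≠ j → EFXBounded (v i) W (2 * v i (s.bundle M i)))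
    (hcheap : ∀ u ∉ s.assigned, IsCheap (v u) (Z u) t W) :
    Invariant M v Z t (s.give j W) :=
  hs.give hv hW ((hs.le_bundle j hj).trans hgain) hothers
    (fun k hk _ => (hs.efx j hj k hk).mono (by linarith)) (fun u hu _ => hcheap u hu)
    (((hv j).mono sdiff_subset).trans ((hs.bag_le_bundle j hj).trans hgain))

lemma Invariant.toBag (hs : Invariant M v Z t s) {h : G} (hh : h ∈ s.pool M)
    (hbundle : ∀ i ∈ s.assigned, v i (insert h (s.bag M)) ≤ v i (s.bundle M i))
    (hlow : ∀ u ∉ s.assigned, v u (insert h (s.bag M)) < t) :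
    Invariant M v Z t (s.toBag h) where
  bundle_eq_empty := by simpa only [bundle_toBag hh, assigned_toBag] using hs.bundle_eq_empty
  le_bundle := by simpa only [bundle_toBag hh, assigned_toBag] using hs.le_bundle
  efx := by simpa only [bundle_toBag hh, assigned_toBag] using hs.efx
  cheap := by simpa only [bundle_toBag hh, assigned_toBag] using hs.cheap
  bag_le_bundle := by simpa only [bundle_toBag hh, bag_toBag hh, assigned_toBag] using hbundle
  bag_le u hu := by simpa only [bag_toBag hh] using (hlow u hu).le

lemma Invariant.permute [Fintype ι] (hs : Invariant M v Z t s) (hA : s.assigned = univ)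
    (σ : Equiv.Perm ι) (hle : ∀ i, v i (s.bundle M i) ≤ v i (s.bundle M (σ i))) :
    Invariant M v Z t (s.permute σ) where
  bundle_eq_empty i hi := absurd (hA ▸ mem_univ i) hi
  le_bundle i hi := by
    rw [bundle_permute]
    exact (hs.le_bundle i hi).trans (hle i)
  efx i hi j _ := by
    rw [bundle_permute, bundle_permute]
    exact (hs.efx i hi (σ j) (hA ▸ mem_univ _)).mono (by linarith [hle i])
  cheap u hu := absurd (hA ▸ mem_univ u) hu
  bag_le_bundle j hj := by
    rw [bag_permute, bundle_permute]
    exact (hs.bag_le_bundle j hj).trans (hle j)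
  bag_le u hu := absurd (hA ▸ mem_univ u) hu

/-- Once the pool is empty, an unassigned agent `u` values the bag at least `t`: its benchmark
bundle `Z u` is covered by the bag and by its parts in the assigned bundles, each worth at most
`2t`. -/
lemma Invariant.le_bag [Fintype ι] (hv : ∀ i, IsSubadditiveValuation (v i))
    (hZM : ∀ i, Z i ⊆ M) (hZt : ∀ i, (2 * Fintype.card ι + 1) * t ≤ v i (Z i))
    (hs : Invariant M v Z t s) (hP : s.pool M = ∅) {u : ι} (hu : u ∉ s.assigned) :
    t ≤ v u (s.bag M) := by
  have hcover : Z u ⊆ (univ.biUnion fun k => Z u ∩ s.bundle M k) ∪ s.bag M := by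
    intro g hg
    rcases mem_pool_or_mem_bag_or_mem_bundle (s := s) (hZM u hg) with hgP | hgB | ⟨k, hgk⟩
    · simp [hP] at hgP
    · exact mem_union_right _ hgB
    · exact mem_union_left _ (mem_biUnion.2 ⟨k, mem_univ _, mem_inter.2 ⟨hg, hgk⟩⟩)
  have hshare : ∀ k, v u (Z u ∩ s.bundle M k) ≤ 2 * t := by
    intro k
    by_cases hk : k ∈ s.assigned
    · exact (hs.cheap u hu k hk).2
    · rw [hs.bundle_eq_empty k hk, inter_empty, (hv u).map_empty]
      linarith [hs.bag_le u hu, (hv u).nonneg (s.bag M)]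
  have hsum : ∑ k, v u (Z u ∩ s.bundle M k) ≤ Fintype.card ι * (2 * t) := by
    simpa using sum_le_card_nsmul univ _ _ fun k _ => hshare k
  have := ((hv u).mono hcover).trans (((hv u).union_le _ _).trans
    (add_le_add_left ((hv u).biUnion_le _ _) _))
  linarith [hZt u]

lemma Invariant.exists_next_of_mem_pool [Fintype ι] (hv : ∀ i, IsSubadditiveValuation (v i))
    (ht : 0 ≤ t) (hZ : ∀ i j, i ≠ j → Disjoint (Z i) (Z j)) (hs : Invariant M v Z t s)
    {h : G} (hh : h ∈ s.pool M) :
    ∃ s', Invariant M v Z t s' ∧ potential M v s' < potential M v s := by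
  have hsingle : {h} ⊆ s.pool M ∪ s.bag M := singleton_subset_iff.2 (mem_union_left _ hh)
  have hinsert : insert h (s.bag M) ⊆ s.pool M ∪ s.bag M :=
    insert_subset (mem_union_left _ hh) subset_union_right
  have hsub {W : Finset G} (hW : W ⊆ s.pool M ∪ s.bag M) {j : ι} :
      W ⊆ s.bundle M j ∪ s.pool M ∪ s.bag M :=
    hW.trans (union_subset_union subset_union_right Subset.rfl)
  by_cases hpeel : ∃ u ∉ s.assigned, t ≤ v u {h}
  · -- An unassigned agent owning `h` in `Z` gets priority; this keeps the invariant `cheap`.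
    obtain ⟨u, ⟨hu, hval⟩, hown⟩ := exists_owner_priority hZ (h := h) hpeel
    refine ⟨_, hs.give_of_not_mem hv hu hsingle hval ?_ ?_, potential_give_lt hu _⟩
    · exact fun i hi => efxBounded_singleton (hv i) (by linarith [hs.le_bundle i hi]) h
    · exact fun u' hu' hne => isCheap_singleton (hv u') ht fun hZ =>
        (not_le.1 fun hval' => hown u' hne hZ ⟨hu', hval'⟩).le.trans (by linarith)
  push Not at hpeel
  by_cases hswap : ∃ j ∈ s.assigned, v j (s.bundle M j) < v j {h}
  · obtain ⟨j, hj, hgain⟩ := hswap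
    refine ⟨_, hs.give_of_mem hv hj (hsub hsingle) hgain.le ?_ ?_,
      potential_give_lt_of_mem hj (hsub hsingle) hgain⟩
    · exact fun i hi _ => efxBounded_singleton (hv i) (by linarith [hs.le_bundle i hi]) h
    · exact fun u hu => .of_le (hv u) (by linarith [hpeel u hu])
  push Not at hswap
  have hcheap : ∀ u ∉ s.assigned, IsCheap (v u) (Z u) t (insert h (s.bag M)) := fun u hu =>
    .of_le (hv u) (((hv u).insert_le _ _).trans (by linarith [hpeel u hu, hs.bag_le u hu]))
  by_cases hbswap : ∃ j ∈ s.assigned, v j (s.bundle M j) < v j (insert h (s.bag M))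
  · obtain ⟨j, hj, hgain⟩ := hbswap
    refine ⟨_, hs.give_of_mem hv hj (hsub hinsert) hgain.le (fun i hi _ => .of_le (hv i) ?_)
      hcheap, potential_give_lt_of_mem hj (hsub hinsert) hgain⟩
    exact ((hv i).insert_le _ _).trans (by linarith [hswap i hi, hs.bag_le_bundle i hi])
  push Not at hbswap
  by_cases hassign : ∃ u ∉ s.assigned, t ≤ v u (insert h (s.bag M))
  · obtain ⟨u, hu, hval⟩ := hassign
    refine ⟨_, hs.give_of_not_mem hv hu hinsert hval (fun i hi => .of_le (hv i) ?_)
      (fun u' hu' _ => hcheap u' hu'), potential_give_lt hu _⟩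
    linarith [hbswap i hi, (hv i).nonneg (s.bundle M i)]
  push Not at hassign
  exact ⟨_, hs.toBag hh hbswap hassign, potential_toBag_lt hh⟩

lemma Invariant.exists_next_of_pool_eq_empty [Fintype ι] [Nonempty ι]
    (hv : ∀ i, IsSubadditiveValuation (v i)) (hZM : ∀ i, Z i ⊆ M)
    (hZt : ∀ i, (2 * Fintype.card ι + 1) * t ≤ v i (Z i)) (hs : Invariant M v Z t s)
    (hP : s.pool M = ∅) :
    (∃ s', Invariant M v Z t s' ∧ s'.assigned = univ ∧ s'.pool M = ∅ ∧ s'.bag M = ∅) ∨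
      ∃ s', Invariant M v Z t s' ∧ potential M v s' < potential M v s := by
  by_cases hfull : ∃ u, u ∉ s.assigned
  · obtain ⟨u, hu⟩ := hfull
    refine .inr ⟨_, hs.give_of_not_mem hv hu subset_union_right (hs.le_bag hv hZM hZt hP hu)
      (fun i hi => .of_le (hv i) ?_) (fun u' hu' _ => .of_le (hv u') ?_), potential_give_lt hu _⟩
    · linarith [hs.bag_le_bundle i hi, (hv i).nonneg (s.bundle M i)]
    · linarith [hs.bag_le u' hu', (hv u').nonneg (s.bag M)]
  push Not at hfull
  have hA : s.assigned = univ := eq_univ_of_forall hfull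
  by_cases hsource : ∃ k, ∀ i, v i (s.bundle M k) ≤ v i (s.bundle M i)
  · obtain ⟨k, hk⟩ := hsource
    have hW : s.bundle M k ∪ s.bag M ⊆ s.bundle M k ∪ s.pool M ∪ s.bag M :=
      union_subset_union subset_union_left Subset.rfl
    refine .inl ⟨_, hs.give_of_mem hv (hfull k) hW ((hv k).mono subset_union_left)
      (fun i hi _ => .of_le (hv i) ?_) (fun u hu => absurd (hfull u) hu), ?_, ?_, ?_⟩
    · exact ((hv i).union_le _ _).trans (by linarith [hk i, hs.bag_le_bundle i hi])
    · simp [hA]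
    · simp [pool_give, hP]
    · simp [bag_give]
  · push Not at hsource
    obtain ⟨σ, hσ, i, hi⟩ := Equiv.Perm.exists_rel_apply_of_forall_exists_rel
      (fun i k => v i (s.bundle M i) < v i (s.bundle M k)) hsource
    have hle : ∀ i, v i (s.bundle M i) ≤ v i (s.bundle M (σ i)) := fun i =>
      (hσ i).elim (fun hfix => by rw [hfix]) le_of_lt
    exact .inr ⟨_, hs.permute hA σ hle, potential_lt_of_improve rfl
      (by simpa only [bundle_permute] using hle) ⟨i, by simpa only [bundle_permute] using hi⟩⟩

lemma exists_invariant_complete [Fintype ι] [Nonempty ι]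
    (hv : ∀ i, IsSubadditiveValuation (v i)) (ht : 0 ≤ t) (hZM : ∀ i, Z i ⊆ M)
    (hZ : ∀ i j, i ≠ j → Disjoint (Z i) (Z j))
    (hZt : ∀ i, (2 * Fintype.card ι + 1) * t ≤ v i (Z i)) :
    ∃ s, Invariant M v Z t s ∧ s.assigned = univ ∧ s.pool M = ∅ ∧ s.bag M = ∅ := by
  have hinit : Invariant M v Z t ⟨∅, fun _ => .pool⟩ := by
    have hbag : (State.bag M ⟨(∅ : Finset ι), fun _ => .pool⟩) = ∅ := by ext; simp
    refine ⟨fun i _ => by ext; simp, by simp, by simp, by simp, by simp, fun u _ => ?_⟩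
    rw [hbag, (hv u).map_empty]
    exact ht
  suffices ∀ s, Invariant M v Z t s →
      ∃ s', Invariant M v Z t s' ∧ s'.assigned = univ ∧ s'.pool M = ∅ ∧ s'.bag M = ∅ from
    this _ hinit
  intro s
  induction s using (InvImage.wf (potential M v) wellFounded_lt).induction with
  | h s ih =>
    intro hs
    rcases (s.pool M).eq_empty_or_nonempty with hP | ⟨h, hh⟩
    · rcases hs.exists_next_of_pool_eq_empty hv hZM hZt hP with hdone | ⟨s', hs', hlt⟩
      · exact hdone
      · exact ih s' hlt hs'
    · obtain ⟨s', hs', hlt⟩ := hs.exists_next_of_mem_pool hv ht hZ hh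
      exact ih s' hlt hs'

end Invariant

theorem exists_complete_half_efx_of_benchmark [Fintype ι] [DecidableEq ι] [Nonempty ι]
    [DecidableEq G] {M : Finset G} {v : ι → Finset G → ℝ} {Z : ι → Finset G} {t : ℝ}
    (hv : ∀ i, IsSubadditiveValuation (v i)) (ht : 0 ≤ t) (hZM : ∀ i, Z i ⊆ M)
    (hZ : ∀ i j, i ≠ j → Disjoint (Z i) (Z j))
    (hZt : ∀ i, (2 * Fintype.card ι + 1) * t ≤ v i (Z i)) :
    ∃ F : ι → Finset G, (∀ i, F i ⊆ M) ∧ (∀ i j, i ≠ j → Disjoint (F i) (F j)) ∧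
      univ.biUnion F = M ∧ (∀ i, t ≤ v i (F i)) ∧
      ∀ i j, ∀ g ∈ F j, v i (F j \ {g}) ≤ 2 * v i (F i) := by
  obtain ⟨s, hs, hA, hP, hB⟩ := exists_invariant_complete hv ht hZM hZ hZt
  refine ⟨s.bundle M, fun i => bundle_subset, fun i j => disjoint_bundle, ?_,
    fun i => hs.le_bundle i (hA ▸ mem_univ i),
    fun i j => hs.efx i (hA ▸ mem_univ i) j (hA ▸ mem_univ j)⟩
  refine Subset.antisymm (biUnion_subset.2 fun i _ => bundle_subset) fun g hg => ?_
  rcases mem_pool_or_mem_bag_or_mem_bundle (s := s) hg with hgP | hgB | ⟨i, hgi⟩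
  · simp [hP] at hgP
  · simp [hB] at hgB
  · exact mem_biUnion.2 ⟨i, mem_univ i, hgi⟩

end SubadditiveEFX

open SubadditiveEFX in
theorem main_complete_egalitarian_general
    {G : Type*} [DecidableEq G]
    (n : ℕ) (hn : 0 < n) (M : Finset G)
    (v : Fin n → Finset G → ℝ)
    (hnorm : ∀ i, v i ∅ = 0)
    (hmono : ∀ i A B, A ⊆ B → v i A ≤ v i B)
    (hsub : ∀ i A B, v i (A ∪ B) ≤ v i A + v i B)
    (ε : ℝ) (hε0 : 0 < ε) (hε1 : ε < 1 / 2) :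
    ∃ X : Fin n → Finset G,
      (∀ i, X i ⊆ M) ∧
      (∀ i j, i ≠ j → Disjoint (X i) (X j)) ∧
      (Finset.univ.biUnion X = M) ∧
      (∀ i j, ∀ g ∈ X j, (1 / 2 - ε) * v i (X j \ {g}) ≤ v i (X i)) ∧
      (∀ Xs : Fin n → Finset G, (∀ i, Xs i ⊆ M) →
        (∀ i j, i ≠ j → Disjoint (Xs i) (Xs j)) →
        ((1 - 2 * ε) / (8 * ((n : ℝ) + 1))) *
            Finset.univ.inf' ⟨⟨0, hn⟩, Finset.mem_univ _⟩ (fun i => v i (Xs i))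
          ≤ Finset.univ.inf' ⟨⟨0, hn⟩, Finset.mem_univ _⟩ (fun i => v i (X i))) := by
  have : Nonempty (Fin n) := ⟨⟨0, hn⟩⟩
  have hv : ∀ i, IsSubadditiveValuation (v i) := fun i => ⟨hnorm i, hmono i, hsub i⟩
  set c := (1 - 2 * ε) / (8 * ((n : ℝ) + 1))
  set welfare := fun X : Fin n → Finset G =>
    Finset.univ.inf' ⟨⟨0, hn⟩, Finset.mem_univ _⟩ fun i => v i (X i)
  obtain ⟨Z, hZM, hZ, hopt⟩ := exists_optimal_allocation M welfare
  have hc : 0 ≤ c := div_nonneg (by linarith) (by positivity)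
  have hcn : (2 * (n : ℝ) + 1) * c ≤ 1 := by
    rw [← le_div_iff₀' (by positivity), div_le_div_iff₀ (by positivity) (by positivity)]
    nlinarith
  have hwZ : 0 ≤ welfare Z := le_inf' _ _ fun i _ => (hv i).nonneg _
  obtain ⟨F, hFM, hF, hFcov, hFt, hFefx⟩ := exists_complete_half_efx_of_benchmark hv
    (mul_nonneg hc hwZ) hZM hZ fun i => by
      rw [Fintype.card_fin, ← mul_assoc]
      nlinarith [inf'_le (fun i => v i (Z i)) (mem_univ i)]
  refine ⟨F, hFM, hF, hFcov, fun i j g hg => ?_, fun Xs hXsM hXs => ?_⟩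
  · nlinarith [hFefx i j g hg, (hv i).nonneg (F j \ {g})]
  · calc c * welfare Xs ≤ c * welfare Z := mul_le_mul_of_nonneg_left (hopt Xs hXsM hXs) hc
      _ ≤ welfare F := le_inf' _ _ fun i _ => hFt i

/-- Main theorem, complete allocation, egalitarian welfare:
For every `ε ∈ (0, 1/2)` there is a complete `(1/2 - ε)`-EFX allocation `X`
whose egalitarian welfare is at least `(1 - 2ε)/(8(n+1))` times that of any
allocation. -/
theorem main_complete_egalitarian
    {G : Type*} [DecidableEq G]
    (n : ℕ) (hn : 0 < n) (M : Finset G) (hm : n ≤ M.card)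
    (v : Fin n → Finset G → ℝ)
    (hv0 : ∀ i A, 0 ≤ v i A)
    (hnorm : ∀ i, v i ∅ = 0)
    (hmono : ∀ i A B, A ⊆ B → v i A ≤ v i B)
    (hsub : ∀ i A B, v i (A ∪ B) ≤ v i A + v i B)
    (ε : ℝ) (hε0 : 0 < ε) (hε1 : ε < 1 / 2) :
    ∃ X : Fin n → Finset G,
      (∀ i, X i ⊆ M) ∧
      (∀ i j, i ≠ j → Disjoint (X i) (X j)) ∧
      (Finset.univ.biUnion X = M) ∧
      (∀ i j, ∀ g ∈ X j, (1 / 2 - ε) * v i (X j \ {g}) ≤ v i (X i)) ∧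
      (∀ Xs : Fin n → Finset G, (∀ i, Xs i ⊆ M) →
        (∀ i j, i ≠ j → Disjoint (Xs i) (Xs j)) →
        ((1 - 2 * ε) / (8 * ((n : ℝ) + 1))) *
            Finset.univ.inf' ⟨⟨0, hn⟩, Finset.mem_univ _⟩ (fun i => v i (Xs i))
          ≤ Finset.univ.inf' ⟨⟨0, hn⟩, Finset.mem_univ _⟩ (fun i => v i (X i))) :=
  main_complete_egalitarian_general n hn M v hnorm hmono hsub ε hε0 hε1
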